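/- Let q be a prime number and l ≥ 2 an integer. For every positive integer s dividing l − 1, the rational number 1/q^{s−1} belongs to ℚ-KS(qˡ). -/

import Mathlib

/-- `α` is an `N`-Korselt base: `α ≠ 0`, `α ≠ N`, and for every prime `p` dividing `N`,
`α.den * p - α.num` divides `α.den * N - α.num`. -/
def QKS (N : ℕ) (α : ℚ) : Prop :=
  α ≠ 0 ∧ α ≠ (N : ℚ) ∧
    ∀ p : ℕ, p.Prime → p ∣ N →
      ((α.den : ℤ) * p - α.num) ∣ ((α.den : ℤ) * N - α.num)

/-!
For `α = 1 / q ^ (s - 1)` we have `α.num = 1` and `α.den = q ^ (s - 1)`, so the Korselt condition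
at the only prime `q` of `q ^ l` reads `q ^ s - 1 ∣ q ^ (s + l - 1) - 1`. This holds because
`s ∣ l - 1` gives `s ∣ s + l - 1`, and `x ^ s - 1 ∣ x ^ (s * t) - 1`.
-/

theorem qks_prime_pow_iff {q l : ℕ} (hq : q.Prime) (hl : l ≠ 0) (α : ℚ) :
    QKS (q ^ l) α ↔ α ≠ 0 ∧ α ≠ ((q ^ l : ℕ) : ℚ) ∧
      ((α.den : ℤ) * q - α.num) ∣ ((α.den : ℤ) * (q ^ l : ℕ) - α.num) := by
  refine and_congr_right' (and_congr_right' ⟨fun h => h q hq (dvd_pow_self q hl), ?_⟩)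
  rintro h p hp hpq
  obtain rfl := (Nat.prime_dvd_prime_iff_eq hp hq).mp (hp.dvd_of_dvd_pow hpq)
  exact h

theorem qks_prime_pow_one_div_pow_iff {q l : ℕ} (hq : q.Prime) (hl : l ≠ 0) (k : ℕ) :
    QKS (q ^ l) (1 / (q : ℚ) ^ k) ↔ (q : ℤ) ^ (k + 1) - 1 ∣ (q : ℤ) ^ (k + l) - 1 := by
  have hα : 1 / (q : ℚ) ^ k = ((q ^ k : ℕ) : ℚ)⁻¹ := by push_cast; rw [one_div]
  have hpos : 0 < q ^ k := pow_pos hq.pos k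
  have hα_le_one : 1 / (q : ℚ) ^ k ≤ 1 :=
    div_le_one_of_le₀ (one_le_pow₀ (mod_cast hq.one_le)) (by positivity)
  have hqpow_gt_one : 1 < (q : ℚ) ^ l := mod_cast Nat.one_lt_pow hl hq.one_lt
  rw [qks_prime_pow_iff hq hl, hα, Rat.inv_natCast_num_of_pos hpos,
    Rat.inv_natCast_den_of_pos hpos, ← hα]
  push_cast
  rw [← pow_succ, ← pow_add,
    and_iff_right (one_div_ne_zero (pow_ne_zero k (mod_cast hq.ne_zero))),
    and_iff_right (hα_le_one.trans_lt hqpow_gt_one).ne]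

theorem stmt_14 (q : ℕ) (hq : q.Prime) (l : ℕ) (hl : 2 ≤ l) (s : ℕ)
    (hs : 1 ≤ s) (hdvd : s ∣ (l - 1)) :
    QKS (q ^ l) (1 / (q : ℚ) ^ (s - 1)) := by
  rw [qks_prime_pow_one_div_pow_iff hq (by omega), Nat.sub_add_cancel hs]
  obtain ⟨t, ht⟩ : s ∣ s - 1 + l := by
    rw [show s - 1 + l = s + (l - 1) by omega]
    exact (Nat.dvd_add_right dvd_rfl).mpr hdvd
  rw [ht]
  exact pow_one_sub_dvd_pow_mul_sub_one _ s t
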